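/- Let M be an additive commutative group, A ∈ M, and let b_d, …, b_0 be bits with k = Σ_{0 ≤ i ≤ d} b_i·2^i. Define x, y ∈ M by x = 0, y = A, and for i = d down to 0: if b_i = 1 then simultaneously x ← x + y and y ← 2y; otherwise y ← y + x and x ← 2x. Then after processing all bits, x = k·A (and y = x + A throughout). -/

import Mathlib

/-!
After `j` steps the ladder holds `(v • A, (v + 1) • A)`, where `v` is the number written by the
`j` leading bits `b d, …, b (d - j + 1)`: a `1` bit sends `(v, v + 1)` to `(2v + 1, 2v + 2)`, a `0`
bit to `(2v, 2v + 1)`, exactly Horner's rule `v ← 2v + bit`. After all `d + 1` bits, Horner's rule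
has evaluated the binary expansion of `k`.
-/

/-- State of the Montgomery ladder for scalar multiplication after `j`
iterations: starting from `(x, y) = (0, A)`, iteration `j` (which processes bit
`d - j`, i.e. bits are processed from `i = d` down to `0`) simultaneously
updates `x ← x + y`, `y ← 2y` when the bit is `1`, and `y ← y + x`, `x ← 2x`
otherwise. -/
def montLadder {M : Type*} [AddCommGroup M] (A : M) (b : ℕ → Bool) (d : ℕ) :
    ℕ → M × M
  | 0 => (0, A)
  | j + 1 =>
    let s := montLadder A b d j
    if b (d - j) then (s.1 + s.2, s.2 + s.2) else (s.1 + s.1, s.2 + s.1)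

def leadingBitsValue (b : ℕ → Bool) (d : ℕ) : ℕ → ℕ
  | 0 => 0
  | j + 1 => 2 * leadingBitsValue b d j + (b (d - j)).toNat

theorem leadingBitsValue_mul_two_pow_add (b : ℕ → Bool) (m j : ℕ) :
    leadingBitsValue b (m + j) (j + 1) * 2 ^ m
        + ∑ i ∈ Finset.range m, (if b i then 2 ^ i else 0)
      = ∑ i ∈ Finset.range (m + j + 1), (if b i then 2 ^ i else 0) := by
  have bit_mul_two_pow (i : ℕ) : (b i).toNat * 2 ^ i = if b i then 2 ^ i else 0 := by
    cases b i <;> simp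
  induction j generalizing m with
  | zero =>
    simp only [leadingBitsValue, Nat.add_zero, Nat.sub_zero, Nat.mul_zero, Nat.zero_add,
      bit_mul_two_pow, Finset.sum_range_succ]
    ring
  | succ j ih =>
    have hbit : m + (j + 1) - (j + 1) = m := Nat.add_sub_cancel m (j + 1)
    rw [leadingBitsValue, hbit, ← Nat.add_assoc, Nat.add_right_comm m j 1, ← ih (m + 1),
      Finset.sum_range_succ, ← bit_mul_two_pow, pow_succ]
    ring

theorem leadingBitsValue_eq_sum (b : ℕ → Bool) (d : ℕ) :
    leadingBitsValue b d (d + 1) = ∑ i ∈ Finset.range (d + 1), (if b i then 2 ^ i else 0) := by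
  simpa using leadingBitsValue_mul_two_pow_add b 0 d

theorem montLadder_eq {M : Type*} [AddCommGroup M] (A : M) (b : ℕ → Bool) (d j : ℕ) :
    montLadder A b d j = (leadingBitsValue b d j • A, (leadingBitsValue b d j + 1) • A) := by
  induction j with
  | zero => simp [montLadder, leadingBitsValue]
  | succ j ih =>
    simp only [montLadder, leadingBitsValue, ih]
    cases b (d - j) <;> simp only [Bool.toNat_false, Bool.toNat_true, Bool.false_eq_true,
      if_false, if_true, Prod.mk.injEq] <;> constructor <;> module

/-- after processing the bits `b d, …, b 0` of `k`, the Montgomery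
ladder for scalar multiplication computes `x = k • A`, with `y = x + A`
throughout. -/
theorem montLadder_correct {M : Type*} [AddCommGroup M] (A : M) (d : ℕ)
    (b : ℕ → Bool) (k : ℕ)
    (hk : k = ∑ i ∈ Finset.range (d + 1), (if b i then 2 ^ i else 0)) :
    (montLadder A b d (d + 1)).1 = k • A ∧
      ∀ j ≤ d + 1, (montLadder A b d j).2 = (montLadder A b d j).1 + A := by
  refine ⟨?_, fun j _ => ?_⟩
  · rw [montLadder_eq, hk, leadingBitsValue_eq_sum]
  · rw [montLadder_eq, add_smul, one_smul]
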